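/- (Pólya–Szegő inequality, multiplicative form) Let a₁,…,aₙ and b₁,…,bₙ be positive real numbers with 0 < a ≤ aᵢ ≤ A < ∞ and 0 < b ≤ bᵢ ≤ B < ∞ for all 1 ≤ i ≤ n. Then (∑_{i=1}^n aᵢ²)(∑_{i=1}^n bᵢ²) ≤ ((ab + AB)²/(4abAB)) (∑_{i=1}^n aᵢbᵢ)². -/

import Mathlib

/-!
For `x ∈ [a, A]` and `y ∈ [b, B]` both `A y - b x` and `B x - a y` are nonnegative; expanding their
product gives `b B x² + a A y² ≤ (a b + A B) x y`. Summing yields the Diaz–Metcalf inequality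
`b B ∑ aᵢ² + a A ∑ bᵢ² ≤ (a b + A B) ∑ aᵢ bᵢ`, and squaring it after AM–GM on the left-hand side
gives `4 a b A B (∑ aᵢ²)(∑ bᵢ²) ≤ (a b + A B)² (∑ aᵢ bᵢ)²`.
-/

open Finset

theorem mul_sq_add_mul_sq_le_of_mem_Icc {a A b B x y : ℝ} (ha : 0 ≤ a) (hb : 0 ≤ b)
    (hx : x ∈ Set.Icc a A) (hy : y ∈ Set.Icc b B) :
    b * B * x ^ 2 + a * A * y ^ 2 ≤ (a * b + A * B) * (x * y) := by
  obtain ⟨hax, hxA⟩ := hx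
  obtain ⟨hby, hyB⟩ := hy
  have hx0 : 0 ≤ x := ha.trans hax
  have hy0 : 0 ≤ y := hb.trans hby
  have h₁ : 0 ≤ A * y - b * x := by nlinarith
  have h₂ : 0 ≤ B * x - a * y := by nlinarith
  nlinarith [mul_nonneg h₁ h₂]

theorem diaz_metcalf {ι : Type*} (s : Finset ι) {a A b B : ℝ} (ha : 0 ≤ a) (hb : 0 ≤ b)
    {f g : ι → ℝ} (hf : ∀ i ∈ s, f i ∈ Set.Icc a A) (hg : ∀ i ∈ s, g i ∈ Set.Icc b B) :
    b * B * ∑ i ∈ s, f i ^ 2 + a * A * ∑ i ∈ s, g i ^ 2 ≤ (a * b + A * B) * ∑ i ∈ s, f i * g i := by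
  simp only [mul_sum, ← sum_add_distrib]
  exact sum_le_sum fun i hi => mul_sq_add_mul_sq_le_of_mem_Icc ha hb (hf i hi) (hg i hi)

theorem polya_szego {ι : Type*} (s : Finset ι) {a A b B : ℝ} (ha : 0 < a) (hb : 0 < b)
    {f g : ι → ℝ} (hf : ∀ i ∈ s, f i ∈ Set.Icc a A) (hg : ∀ i ∈ s, g i ∈ Set.Icc b B) :
    (∑ i ∈ s, f i ^ 2) * (∑ i ∈ s, g i ^ 2)
      ≤ (a * b + A * B) ^ 2 / (4 * a * b * A * B) * (∑ i ∈ s, f i * g i) ^ 2 := by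
  obtain rfl | ⟨i, hi⟩ := s.eq_empty_or_nonempty
  · simp
  have hA : 0 < A := ha.trans_le ((hf i hi).1.trans (hf i hi).2)
  have hB : 0 < B := hb.trans_le ((hg i hi).1.trans (hg i hi).2)
  have hsq : 4 * (b * B * ∑ i ∈ s, f i ^ 2) * (a * A * ∑ i ∈ s, g i ^ 2)
      ≤ ((a * b + A * B) * ∑ i ∈ s, f i * g i) ^ 2 :=
    (four_mul_le_sq_add _ _).trans
      (pow_le_pow_left₀ (by positivity) (diaz_metcalf s ha.le hb.le hf hg) 2)
  rw [div_mul_eq_mul_div, le_div_iff₀ (by positivity)]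
  linear_combination hsq

theorem polya_szego_multiplicative_general
    (n : ℕ) (a A b B : ℝ) (ha : 0 < a) (hb : 0 < b)
    (av bv : Fin n → ℝ)
    (haA : ∀ i, a ≤ av i ∧ av i ≤ A) (hbB : ∀ i, b ≤ bv i ∧ bv i ≤ B) :
    (∑ i, (av i) ^ 2) * (∑ i, (bv i) ^ 2)
      ≤ (a * b + A * B) ^ 2 / (4 * a * b * A * B) * (∑ i, av i * bv i) ^ 2 :=
  polya_szego univ ha hb (fun i _ => haA i) (fun i _ => hbB i)

/-- **Pólya–Szegő inequality**, multiplicative form. -/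
theorem polya_szego_multiplicative
    (n : ℕ) (hn : 0 < n) (a A b B : ℝ) (ha : 0 < a) (hb : 0 < b)
    (av bv : Fin n → ℝ)
    (haA : ∀ i, a ≤ av i ∧ av i ≤ A) (hbB : ∀ i, b ≤ bv i ∧ bv i ≤ B) :
    (∑ i, (av i) ^ 2) * (∑ i, (bv i) ^ 2)
      ≤ (a * b + A * B) ^ 2 / (4 * a * b * A * B) * (∑ i, av i * bv i) ^ 2 :=
  polya_szego_multiplicative_general n a A b B ha hb av bv haA hbB
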